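/- Let (t_k) be a sequence of positive reals with t_k → 0, and for each k let (x^k,y^k) be a Karush–Kuhn–Tucker point of the Scholtes-type regularization S(t_k). Suppose (x^k,y^k) → (x̄,ȳ) as k → ∞ (so that (x̄,ȳ) is feasible for the regularized continuous reformulation R) and that MPOC-LICQ holds at (x̄,ȳ). Then (x̄,ȳ) is a T-stationary point of R. -/

import Mathlib

open scoped Classical
open Finset Filter Topology

noncomputable section
namespace Scholtes

/-- Vectors in ℝⁿ. -/
abbrev Vec (n : ℕ) := Fin n → ℝ

variable {n : ℕ} {P Q : Type*} [Fintype P] [Fintype Q]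

/-- Euclidean dot product. -/
def dot (u v : Vec n) : ℝ := ∑ i, u i * v i

/-- Gradient: vector of partial derivatives. -/
def grad (f : Vec n → ℝ) (x : Vec n) : Vec n := fun i => fderiv ℝ f x (Pi.single i 1)

/-- Hessian bilinear form of `L` at `z`, evaluated at directions `ξ`, `ζ`. -/
def hess (L : Vec n × Vec n → ℝ) (z ξ ζ : Vec n × Vec n) : ℝ :=
  fderiv ℝ (fun w => fderiv ℝ L w ξ) z ζ

/-- The pair vector (e_i, 0) ∈ ℝ²ⁿ. -/
def ex (i : Fin n) : Vec n × Vec n := (Pi.single i 1, 0)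

/-- The pair vector (0, e_i) ∈ ℝ²ⁿ. -/
def ey (i : Fin n) : Vec n × Vec n := (0, Pi.single i 1)

/-- The pair vector (0, e) ∈ ℝ²ⁿ, where e is the all-ones vector. -/
def eAll : Vec n × Vec n := (0, fun _ => 1)

/-- The pair vector (y_i e_i, x_i e_i) ∈ ℝ²ⁿ. -/
def hvec (x y : Vec n) (i : Fin n) : Vec n × Vec n := (Pi.single i (y i), Pi.single i (x i))

/-- The number of negative eigenvalues of the bilinear form `B` restricted to the
(sub)space `T`, expressed as the maximal dimension of a linear subspace of `T` on
which the associated quadratic form is negative definite. -/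
def negIndex (B : (Vec n × Vec n) → (Vec n × Vec n) → ℝ) (T : (Vec n × Vec n) → Prop) : ℕ :=
  sSup {d : ℕ | ∃ W : Submodule ℝ (Vec n × Vec n),
    (∀ ξ ∈ W, T ξ) ∧ Module.finrank ℝ W = d ∧ ∀ ξ ∈ W, ξ ≠ 0 → B ξ ξ < 0}

/-- The data and standing assumptions of the paper: objective `f`, equality
constraints `h`, inequality constraints `g`, positive pairwise different linear
coefficients `c`, cardinality bound `s` and regularization parameter `ε`. -/
structure Setting (n : ℕ) (P Q : Type*) [Fintype P] [Fintype Q] where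
  f : Vec n → ℝ
  h : P → Vec n → ℝ
  g : Q → Vec n → ℝ
  c : Vec n
  s : ℕ
  ε : ℝ
  hn : 1 ≤ n
  hf : ContDiff ℝ 2 f
  hh : ∀ p, ContDiff ℝ 2 (h p)
  hg : ∀ q, ContDiff ℝ 2 (g q)
  hcpos : ∀ i, 0 < c i
  hcinj : Function.Injective c
  hs : s < n
  hεpos : 0 < ε
  hεle : ε ≤ 1 / ((n : ℝ) - s)

/-- Index set a01: x̄_i = 0, ȳ_i > 0. -/
def a01 (x y : Vec n) : Finset (Fin n) := univ.filter fun i => x i = 0 ∧ 0 < y i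

/-- Index set a10: x̄_i ≠ 0, ȳ_i = 0. -/
def a10 (x y : Vec n) : Finset (Fin n) := univ.filter fun i => x i ≠ 0 ∧ y i = 0

/-- Index set a00: x̄_i = 0, ȳ_i = 0. -/
def a00 (x y : Vec n) : Finset (Fin n) := univ.filter fun i => x i = 0 ∧ y i = 0

/-- Index set N(y): y_i = 0. -/
def Nact (y : Vec n) : Finset (Fin n) := univ.filter fun i => y i = 0

/-- Index set H≥(x,y): x_i y_i = −t. -/
def Hge (t : ℝ) (x y : Vec n) : Finset (Fin n) := univ.filter fun i => x i * y i = -t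

/-- Index set H≤(x,y): x_i y_i = t. -/
def Hle (t : ℝ) (x y : Vec n) : Finset (Fin n) := univ.filter fun i => x i * y i = t

/-- Index set H(x,y) = H≥ ∪ H≤. -/
def Hact (t : ℝ) (x y : Vec n) : Finset (Fin n) := Hge t x y ∪ Hle t x y

/-- Active inequality constraints Q0(x). -/
def Q0 (D : Setting n P Q) (x : Vec n) : Finset Q := univ.filter fun q => D.g q x = 0

/-- Active upper bounds E(y): y_i = 1 + ε. -/
def Eact (D : Setting n P Q) (y : Vec n) : Finset (Fin n) := univ.filter fun i => y i = 1 + D.ε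

/-- Index set O(x,y) = complement of E(y) ∪ N(y) ∪ H(x,y). -/
def Oact (D : Setting n P Q) (t : ℝ) (x y : Vec n) : Finset (Fin n) :=
  (Eact D y ∪ Nact y ∪ Hact t x y)ᶜ

/-- Feasibility for the regularized continuous reformulation R. -/
def feasR (D : Setting n P Q) (x y : Vec n) : Prop :=
  (∀ p, D.h p x = 0) ∧ (∀ q, 0 ≤ D.g q x) ∧ ((n : ℝ) - D.s ≤ ∑ i, y i) ∧
  (∀ i, x i * y i = 0) ∧ (∀ i, 0 ≤ y i ∧ y i ≤ 1 + D.ε)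

/-- Feasibility for the Scholtes-type regularization S(t). -/
def feasS (D : Setting n P Q) (t : ℝ) (x y : Vec n) : Prop :=
  (∀ p, D.h p x = 0) ∧ (∀ q, 0 ≤ D.g q x) ∧ ((n : ℝ) - D.s ≤ ∑ i, y i) ∧
  (∀ i, -t ≤ x i * y i ∧ x i * y i ≤ t) ∧ (∀ i, 0 ≤ y i ∧ y i ≤ 1 + D.ε)

/-- Multipliers for T-stationarity (defined on the whole index ranges). -/
structure TMult (n : ℕ) (P Q : Type*) where
  lam : P → ℝ
  mu1 : Q → ℝ
  mu2 : Fin n → ℝ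
  mu3 : ℝ
  sig1 : Fin n → ℝ
  sig2 : Fin n → ℝ
  rho1 : Fin n → ℝ
  rho2 : Fin n → ℝ

/-- The T-stationarity equation (1) of Definition 2. -/
def TStatEq (D : Setting n P Q) (x y : Vec n) (M : TMult n P Q) : Prop :=
  ((grad D.f x, D.c) : Vec n × Vec n) =
    (∑ p, M.lam p • ((grad (D.h p) x, (0 : Vec n)) : Vec n × Vec n))
    + (∑ q ∈ Q0 D x, M.mu1 q • ((grad (D.g q) x, (0 : Vec n)) : Vec n × Vec n))
    - (∑ i ∈ Eact D y, M.mu2 i • ey i)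
    + M.mu3 • eAll
    + (∑ i ∈ a01 x y, M.sig1 i • ex i)
    + (∑ i ∈ a10 x y, M.sig2 i • ey i)
    + (∑ i ∈ a00 x y, (M.rho1 i • ex i + M.rho2 i • ey i))

/-- (x,y) is a T-stationary point of R with multipliers M. -/
def TStatAt (D : Setting n P Q) (x y : Vec n) (M : TMult n P Q) : Prop :=
  feasR D x y ∧
  (∀ q ∈ Q0 D x, 0 ≤ M.mu1 q) ∧
  (∀ i ∈ Eact D y, 0 ≤ M.mu2 i) ∧
  0 ≤ M.mu3 ∧
  M.mu3 * ((∑ i, y i) - ((n : ℝ) - D.s)) = 0 ∧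
  (∀ i ∈ a00 x y, M.rho1 i = 0 ∨ M.rho2 i ≤ 0) ∧
  TStatEq D x y M

/-- (x,y) is a T-stationary point of R. -/
def TStat (D : Setting n P Q) (x y : Vec n) : Prop := ∃ M, TStatAt D x y M

/-- MPOC-tailored LICQ at a feasible point (x,y) of R: the indicated family of
vectors in ℝ²ⁿ is linearly independent. -/
def MPOC_LICQ (D : Setting n P Q) (x y : Vec n) : Prop :=
  ∀ (lam : P → ℝ) (mu1 : Q → ℝ) (mu2 : Fin n → ℝ) (mu3 : ℝ) (s1 s2 : Fin n → ℝ),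
    ((∑ i, y i) ≠ (n : ℝ) - D.s → mu3 = 0) →
    (∑ p, lam p • ((grad (D.h p) x, (0 : Vec n)) : Vec n × Vec n))
    + (∑ q ∈ Q0 D x, mu1 q • ((grad (D.g q) x, (0 : Vec n)) : Vec n × Vec n))
    + (∑ i ∈ Eact D y, mu2 i • ey i)
    + mu3 • eAll
    + (∑ i ∈ a01 x y ∪ a00 x y, s1 i • ex i)
    + (∑ i ∈ a10 x y ∪ a00 x y, s2 i • ey i) = 0 →
    (∀ p, lam p = 0) ∧ (∀ q ∈ Q0 D x, mu1 q = 0) ∧ (∀ i ∈ Eact D y, mu2 i = 0) ∧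
    mu3 = 0 ∧ (∀ i ∈ a01 x y ∪ a00 x y, s1 i = 0) ∧ (∀ i ∈ a10 x y ∪ a00 x y, s2 i = 0)

/-- The Lagrange function L^R associated with the T-stationary point (x̄,ȳ)
and multipliers M. -/
def LagR (D : Setting n P Q) (xb yb : Vec n) (M : TMult n P Q) (z : Vec n × Vec n) : ℝ :=
  D.f z.1 + dot D.c z.2
    - (∑ p, M.lam p * D.h p z.1)
    - (∑ q ∈ Q0 D xb, M.mu1 q * D.g q z.1)
    + (∑ i ∈ Eact D yb, M.mu2 i * (z.2 i - (1 + D.ε)))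
    - M.mu3 * ((∑ i, z.2 i) - ((n : ℝ) - D.s))
    - (∑ i ∈ a01 xb yb, M.sig1 i * z.1 i)
    - (∑ i ∈ a10 xb yb, M.sig2 i * z.2 i)
    - (∑ i ∈ a00 xb yb, (M.rho1 i * z.1 i + M.rho2 i * z.2 i))

/-- Membership in the tangent space T^R at (x̄,ȳ). -/
def inTR (D : Setting n P Q) (x y : Vec n) (ξ : Vec n × Vec n) : Prop :=
  (∀ p, dot (grad (D.h p) x) ξ.1 = 0) ∧
  (∀ q ∈ Q0 D x, dot (grad (D.g q) x) ξ.1 = 0) ∧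
  (∀ i ∈ Eact D y, ξ.2 i = 0) ∧
  ((∑ i, y i) = (n : ℝ) - D.s → (∑ i, ξ.2 i) = 0) ∧
  (∀ i ∈ a00 x y ∪ a01 x y, ξ.1 i = 0) ∧
  (∀ i ∈ a00 x y ∪ a10 x y, ξ.2 i = 0)

/-- Nondegenerate T-stationary point with multipliers M (NDT1–NDT4). -/
def NondegTStatAt (D : Setting n P Q) (x y : Vec n) (M : TMult n P Q) : Prop :=
  TStatAt D x y M ∧
  MPOC_LICQ D x y ∧
  (∀ q ∈ Q0 D x, 0 < M.mu1 q) ∧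
  (∀ i ∈ Eact D y, 0 < M.mu2 i) ∧
  ((∑ i, y i) = (n : ℝ) - D.s → 0 < M.mu3) ∧
  (∀ i ∈ a00 x y, M.rho1 i ≠ 0 ∧ M.rho2 i < 0) ∧
  (∀ ξ, inTR D x y ξ → (∀ ζ, inTR D x y ζ → hess (LagR D x y M) (x, y) ξ ζ = 0) → ξ = 0)

/-- T-index: quadratic index (number of negative eigenvalues of the restricted
Hessian of L^R) plus the biactive index |a00|. -/
def TIndex (D : Setting n P Q) (x y : Vec n) (M : TMult n P Q) : ℕ :=
  negIndex (hess (LagR D x y M) (x, y)) (inTR D x y) + (a00 x y).card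

/-- Multipliers for KKT points of S(t) (defined on the whole index ranges). -/
structure SMult (n : ℕ) (P Q : Type*) where
  lam : P → ℝ
  mu1 : Q → ℝ
  mu2 : Fin n → ℝ
  mu3 : ℝ
  etaGe : Fin n → ℝ
  etaLe : Fin n → ℝ
  nu : Fin n → ℝ

/-- The KKT equation for S(t). -/
def KKTEq (D : Setting n P Q) (t : ℝ) (x y : Vec n) (M : SMult n P Q) : Prop :=
  ((grad D.f x, D.c) : Vec n × Vec n) =
    (∑ p, M.lam p • ((grad (D.h p) x, (0 : Vec n)) : Vec n × Vec n))
    + (∑ q ∈ Q0 D x, M.mu1 q • ((grad (D.g q) x, (0 : Vec n)) : Vec n × Vec n))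
    - (∑ i ∈ Eact D y, M.mu2 i • ey i)
    + M.mu3 • eAll
    + (∑ i ∈ Hge t x y, M.etaGe i • hvec x y i)
    - (∑ i ∈ Hle t x y, M.etaLe i • hvec x y i)
    + (∑ i ∈ Nact y, M.nu i • ey i)

/-- (x,y) is a KKT point of S(t) with multipliers M. -/
def KKTAt (D : Setting n P Q) (t : ℝ) (x y : Vec n) (M : SMult n P Q) : Prop :=
  feasS D t x y ∧
  (∀ q ∈ Q0 D x, 0 ≤ M.mu1 q) ∧
  (∀ i ∈ Eact D y, 0 ≤ M.mu2 i) ∧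
  0 ≤ M.mu3 ∧
  M.mu3 * ((∑ i, y i) - ((n : ℝ) - D.s)) = 0 ∧
  (∀ i ∈ Hge t x y, 0 ≤ M.etaGe i) ∧
  (∀ i ∈ Hle t x y, 0 ≤ M.etaLe i) ∧
  (∀ i ∈ Nact y, 0 ≤ M.nu i) ∧
  KKTEq D t x y M

/-- (x,y) is a KKT point of S(t). -/
def KKT (D : Setting n P Q) (t : ℝ) (x y : Vec n) : Prop := ∃ M, KKTAt D t x y M

/-- LICQ at a feasible point (x,y) of S(t). -/
def LICQ (D : Setting n P Q) (t : ℝ) (x y : Vec n) : Prop :=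
  ∀ (lam : P → ℝ) (mu1 : Q → ℝ) (mu2 : Fin n → ℝ) (mu3 : ℝ) (eta nu : Fin n → ℝ),
    ((∑ i, y i) ≠ (n : ℝ) - D.s → mu3 = 0) →
    (∑ p, lam p • ((grad (D.h p) x, (0 : Vec n)) : Vec n × Vec n))
    + (∑ q ∈ Q0 D x, mu1 q • ((grad (D.g q) x, (0 : Vec n)) : Vec n × Vec n))
    + (∑ i ∈ Eact D y, mu2 i • ey i)
    + mu3 • eAll
    + (∑ i ∈ Hact t x y, eta i • hvec x y i)
    + (∑ i ∈ Nact y, nu i • ey i) = 0 →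
    (∀ p, lam p = 0) ∧ (∀ q ∈ Q0 D x, mu1 q = 0) ∧ (∀ i ∈ Eact D y, mu2 i = 0) ∧
    mu3 = 0 ∧ (∀ i ∈ Hact t x y, eta i = 0) ∧ (∀ i ∈ Nact y, nu i = 0)

/-- The Lagrange function L^S associated with the KKT point (x̄,ȳ) of S(t)
and multipliers M. -/
def LagS (D : Setting n P Q) (t : ℝ) (xb yb : Vec n) (M : SMult n P Q)
    (z : Vec n × Vec n) : ℝ :=
  D.f z.1 + dot D.c z.2
    - (∑ p, M.lam p * D.h p z.1)
    - (∑ q ∈ Q0 D xb, M.mu1 q * D.g q z.1)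
    + (∑ i ∈ Eact D yb, M.mu2 i * (z.2 i - (1 + D.ε)))
    - M.mu3 * ((∑ i, z.2 i) - ((n : ℝ) - D.s))
    - (∑ i ∈ Hge t xb yb, M.etaGe i * (z.1 i * z.2 i + t))
    + (∑ i ∈ Hle t xb yb, M.etaLe i * (z.1 i * z.2 i - t))
    - (∑ i ∈ Nact yb, M.nu i * z.2 i)

/-- Membership in the tangent space T^S at (x,y) for S(t). -/
def inTS (D : Setting n P Q) (t : ℝ) (x y : Vec n) (ξ : Vec n × Vec n) : Prop :=
  (∀ p, dot (grad (D.h p) x) ξ.1 = 0) ∧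
  (∀ q ∈ Q0 D x, dot (grad (D.g q) x) ξ.1 = 0) ∧
  (∀ i ∈ Eact D y, ξ.2 i = 0) ∧
  ((∑ i, y i) = (n : ℝ) - D.s → (∑ i, ξ.2 i) = 0) ∧
  (∀ i ∈ Hact t x y, y i * ξ.1 i + x i * ξ.2 i = 0) ∧
  (∀ i ∈ Nact y, ξ.2 i = 0)

/-- Nondegenerate KKT point of S(t) with multipliers M (ND1–ND3). -/
def NondegKKTAt (D : Setting n P Q) (t : ℝ) (x y : Vec n) (M : SMult n P Q) : Prop :=
  KKTAt D t x y M ∧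
  LICQ D t x y ∧
  (∀ q ∈ Q0 D x, 0 < M.mu1 q) ∧
  (∀ i ∈ Eact D y, 0 < M.mu2 i) ∧
  (∀ i ∈ Hge t x y, 0 < M.etaGe i) ∧
  (∀ i ∈ Hle t x y, 0 < M.etaLe i) ∧
  (∀ i ∈ Nact y, 0 < M.nu i) ∧
  ((∑ i, y i) = (n : ℝ) - D.s → 0 < M.mu3) ∧
  (∀ ξ, inTS D t x y ξ → (∀ ζ, inTS D t x y ζ → hess (LagS D t x y M) (x, y) ξ ζ = 0) → ξ = 0)

/-- Quadratic index of a KKT point of S(t): number of negative eigenvalues of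
the restricted Hessian of L^S. -/
def QIdx (D : Setting n P Q) (t : ℝ) (x y : Vec n) (M : SMult n P Q) : ℕ :=
  negIndex (hess (LagS D t x y M) (x, y)) (inTS D t x y)

end Scholtes

/-!
The KKT equation of `S(t_k)` is rewritten as a linear combination of vectors converging to the
MPOC-LICQ family at `(x̄, ȳ)`. With `η_i = η≥_i - η≤_i`, the terms
`η_i (y_i e_i, x_i e_i) + ν_i (0, e_i)` are regrouped according to the limit: for `i ∈ a01` they
equal `η_i y_i (e_i, (x_i / y_i) e_i)` (as `ν_i = 0` once `y_i > 0`), for `i ∈ a10` they equal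
`(η_i x_i + ν_i) ((y_i / x_i) e_i, e_i)` (as `ν_i y_i = 0`), and for `i ∈ a00` they stay
`η_i y_i (e_i, 0) + (η_i x_i + ν_i) (0, e_i)`. For large `k` the coefficients vanish outside the
index set of the MPOC-LICQ family, so its linear independence bounds them and makes them
converge; the limits are T-multipliers. On `a00`, `η_i y_i ≠ 0` forces `y_i > 0`, hence
`ν_i = 0`, and `x_i y_i = -t` on `H≥`, `x_i y_i = t` on `H≤` give `η_i x_i ≤ 0`; in the limit
`ϱ_{1,i} = 0` or `ϱ_{2,i} ≤ 0`.
-/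

section

variable {E F : Type*} [NormedAddCommGroup E] [NormedSpace ℝ E] [FiniteDimensional ℝ E]
  [NormedAddCommGroup F] [NormedSpace ℝ F]

theorem LinearMap.exists_norm_le_mul_norm_of_injOn (B : E →ₗ[ℝ] F) {V : Submodule ℝ E}
    (hB : ∀ w ∈ V, B w = 0 → w = 0) :
    ∃ K : ℝ, 0 ≤ K ∧ ∀ w ∈ V, ‖w‖ ≤ K * ‖B w‖ := by
  have hker : LinearMap.ker (B.comp V.subtype) = ⊥ :=
    LinearMap.ker_eq_bot'.mpr fun w hw => Subtype.ext (hB w w.2 hw)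
  obtain ⟨K, -, hK⟩ := (B.comp V.subtype).exists_antilipschitzWith hker
  refine ⟨K, K.2, fun w hw => ?_⟩
  simpa using hK.le_mul_dist ⟨w, hw⟩ 0

theorem LinearMap.exists_tendsto_of_tendsto_perturbation (B : E →ₗ[ℝ] F) {V : Submodule ℝ E}
    (hB : ∀ w ∈ V, B w = 0 → w = 0) {A : ℕ → E → F} {δ : ℕ → ℝ}
    (hδ : Tendsto δ atTop (𝓝 0)) (hA : ∀ k w, ‖A k w - B w‖ ≤ δ k * ‖w‖)
    {w : ℕ → E} (hwV : ∀ᶠ k in atTop, w k ∈ V) {v : F}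
    (hv : Tendsto (fun k => A k (w k)) atTop (𝓝 v)) :
    ∃ w₀ ∈ V, Tendsto w atTop (𝓝 w₀) ∧ B w₀ = v := by
  obtain ⟨K, hK0, hK⟩ := B.exists_norm_le_mul_norm_of_injOn hB
  set R := 2 * K * (‖v‖ + 1)
  have hbdd : ∀ᶠ k in atTop, ‖w k‖ ≤ R := by
    have hsmall : ∀ᶠ k in atTop, K * δ k ≤ 1 / 2 := by
      have : Tendsto (fun k => K * δ k) atTop (𝓝 0) := by simpa using hδ.const_mul K
      exact this.eventually (ge_mem_nhds (by norm_num))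
    have hnear : ∀ᶠ k in atTop, ‖A k (w k)‖ ≤ ‖v‖ + 1 :=
      hv.norm.eventually (ge_mem_nhds (lt_add_one _))
    filter_upwards [hwV, hsmall, hnear] with k hV hs hn
    have h1 := norm_le_norm_add_norm_sub (A k (w k)) (B (w k))
    have h2 := hK _ hV
    nlinarith [hA k (w k), norm_nonneg (w k)]
  have hBw : Tendsto (fun k => B (w k)) atTop (𝓝 v) := by
    have herr : Tendsto (fun k => A k (w k) - B (w k)) atTop (𝓝 0) := by
      refine squeeze_zero_norm' ?_ (by simpa using hδ.abs.mul_const R)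
      filter_upwards [hbdd] with k hk
      calc ‖A k (w k) - B (w k)‖ ≤ δ k * ‖w k‖ := hA k (w k)
        _ ≤ |δ k| * ‖w k‖ := by gcongr; exact le_abs_self _
        _ ≤ |δ k| * R := by gcongr
    simpa using hv.sub herr
  have hv_mem : v ∈ V.map B := by
    refine (Submodule.closed_of_finiteDimensional _).mem_of_tendsto hBw ?_
    filter_upwards [hwV] with k hk using Submodule.mem_map_of_mem hk
  obtain ⟨w₀, hw₀, rfl⟩ := hv_mem
  refine ⟨w₀, hw₀, tendsto_iff_norm_sub_tendsto_zero.mpr ?_, rfl⟩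
  refine squeeze_zero_norm' ?_
    (by simpa using (tendsto_iff_norm_sub_tendsto_zero.mp hBw).const_mul K)
  filter_upwards [hwV] with k hk
  simpa using hK _ (V.sub_mem hk hw₀)

end

section

variable {ι F : Type*} [Fintype ι] [NormedAddCommGroup F] [NormedSpace ℝ F]

theorem norm_sum_smul_sub_sum_smul_le (u : ι → ℝ) (c c' : ι → F) :
    ‖∑ i, u i • c i - ∑ i, u i • c' i‖ ≤ (∑ i, ‖c i - c' i‖) * ‖u‖ := by
  rw [← Finset.sum_sub_distrib, Finset.sum_mul]
  refine (norm_sum_le _ _).trans (Finset.sum_le_sum fun i _ => ?_)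
  rw [← smul_sub, norm_smul, mul_comm]
  exact mul_le_mul_of_nonneg_left (norm_le_pi_norm u i) (norm_nonneg _)

theorem exists_tendsto_of_tendsto_sum_smul {c : ℕ → ι → F} {c₀ : ι → F}
    (hc : Tendsto c atTop (𝓝 c₀)) {S : Set ι}
    (hS : ∀ w : ι → ℝ, (∀ i ∉ S, w i = 0) → ∑ i, w i • c₀ i = 0 → w = 0)
    {u : ℕ → ι → ℝ} (hu : ∀ᶠ k in atTop, ∀ i ∉ S, u k i = 0) {v : F}
    (hv : Tendsto (fun k => ∑ i, u k i • c k i) atTop (𝓝 v)) :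
    ∃ u₀ : ι → ℝ, (∀ i ∉ S, u₀ i = 0) ∧ Tendsto u atTop (𝓝 u₀) ∧ ∑ i, u₀ i • c₀ i = v := by
  let V : Submodule ℝ (ι → ℝ) := Submodule.pi Sᶜ fun _ => ⊥
  have hV : ∀ w, w ∈ V ↔ ∀ i ∉ S, w i = 0 := by simp [V, Submodule.mem_pi]
  have hδ : Tendsto (fun k => ∑ i, ‖c k i - c₀ i‖) atTop (𝓝 0) := by
    simpa using tendsto_finsetSum _ fun i _ => ((tendsto_pi_nhds.mp hc i).sub_const (c₀ i)).norm
  obtain ⟨u₀, hu₀, hlim, hsum⟩ :=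
    (Fintype.linearCombination ℝ c₀).exists_tendsto_of_tendsto_perturbation
      (V := V) (A := fun k w => ∑ i, w i • c k i) (fun w hw => hS w ((hV w).mp hw)) hδ
      (fun k w => by
        rw [Fintype.linearCombination_apply]
        exact norm_sum_smul_sub_sum_smul_le w (c k) c₀)
      (by simpa only [hV] using hu) hv
  rw [Fintype.linearCombination_apply] at hsum
  exact ⟨u₀, (hV u₀).mp hu₀, hlim, hsum⟩

end

theorem Filter.Tendsto.eventually_imp_ne {α X : Type*} [TopologicalSpace X] [T1Space X]
    {l : Filter α} {f : α → X} {a : X} (hf : Tendsto f l (𝓝 a)) (b : X) :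
    ∀ᶠ x in l, a ≠ b → f x ≠ b := by
  by_cases h : a = b
  · exact .of_forall fun _ h' => absurd h h'
  · exact (hf.eventually_ne h).mono fun _ hx _ => hx

namespace Scholtes

variable {n : ℕ} {P Q : Type*}

theorem continuous_grad {f : Vec n → ℝ} (hf : ContDiff ℝ 1 f) : Continuous (grad f) :=
  continuous_pi fun _ => (hf.continuous_fderiv one_ne_zero).clm_apply continuous_const

theorem hvec_eq (x y : Vec n) (i : Fin n) : hvec x y i = y i • ex i + x i • ey i := by
  ext <;> simp [hvec, ex, ey, ← Pi.single_smul]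

theorem mem_a01_or_mem_a10_or_mem_a00 {x y : Vec n} (hxy : ∀ i, x i * y i = 0)
    (hy : ∀ i, 0 ≤ y i) (i : Fin n) : i ∈ a01 x y ∨ i ∈ a10 x y ∨ i ∈ a00 x y := by
  simp only [a01, a10, a00, Finset.mem_filter, Finset.mem_univ, true_and]
  rcases mul_eq_zero.mp (hxy i) with hx | hy0
  · rcases (hy i).lt_or_eq with hpos | hzero
    · exact Or.inl ⟨hx, hpos⟩
    · exact Or.inr (Or.inr ⟨hx, hzero.symm⟩)
  · by_cases hx : x i = 0
    · exact Or.inr (Or.inr ⟨hx, hy0⟩)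
    · exact Or.inr (Or.inl ⟨hx, hy0⟩)

theorem disjoint_a01_a00 (x y : Vec n) : Disjoint (a01 x y) (a00 x y) := by
  simp only [a01, a00, Finset.disjoint_filter]
  exact fun i _ h h' => h.2.ne' h'.2

theorem disjoint_a10_a00 (x y : Vec n) : Disjoint (a10 x y) (a00 x y) := by
  simp only [a10, a00, Finset.disjoint_filter]
  exact fun i _ h h' => h.1 h'.1

theorem disjoint_a01_a10 (x y : Vec n) : Disjoint (a01 x y) (a10 x y) := by
  simp only [a01, a10, Finset.disjoint_filter]
  exact fun i _ h h' => h'.1 h.1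

abbrev Slot (n : ℕ) (P Q : Type*) := P ⊕ Q ⊕ Fin n ⊕ Unit ⊕ Fin n ⊕ Fin n

abbrev Slot.eqn (p : P) : Slot n P Q := .inl p
abbrev Slot.ineq (q : Q) : Slot n P Q := .inr (.inl q)
abbrev Slot.upper (i : Fin n) : Slot n P Q := .inr (.inr (.inl i))
abbrev Slot.card : Slot n P Q := .inr (.inr (.inr (.inl ())))
abbrev Slot.dirX (i : Fin n) : Slot n P Q := .inr (.inr (.inr (.inr (.inl i))))
abbrev Slot.dirY (i : Fin n) : Slot n P Q := .inr (.inr (.inr (.inr (.inr i))))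

def slotElim {α : Type*} (a : P → α) (b : Q → α) (c : Fin n → α) (d : α) (e f : Fin n → α) :
    Slot n P Q → α :=
  Sum.elim a <| Sum.elim b <| Sum.elim c <| Sum.elim (fun _ => d) <| Sum.elim e f

theorem sum_slot [Fintype P] [Fintype Q] {M : Type*} [AddCommMonoid M] (f : Slot n P Q → M) :
    ∑ j, f j = ∑ p, f (.eqn p) + ∑ q, f (.ineq q) + ∑ i, f (.upper i) + f .card
      + ∑ i, f (.dirX i) + ∑ i, f (.dirY i) := by
  simp only [Fintype.sum_sum_type, Fintype.sum_unique]
  abel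

def signedEta (t : ℝ) (x y : Vec n) (M : SMult n P Q) (i : Fin n) : ℝ :=
  (if i ∈ Hge t x y then M.etaGe i else 0) - (if i ∈ Hle t x y then M.etaLe i else 0)

def nuExt (y : Vec n) (M : SMult n P Q) (i : Fin n) : ℝ := if i ∈ Nact y then M.nu i else 0

def toTMult (w : Slot n P Q → ℝ) : TMult n P Q where
  lam p := w (.eqn p)
  mu1 q := w (.ineq q)
  mu2 i := w (.upper i)
  mu3 := w .card
  sig1 i := w (.dirX i)
  sig2 i := w (.dirY i)
  rho1 i := w (.dirX i)
  rho2 i := w (.dirY i)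

variable [Fintype P] [Fintype Q]

theorem signedEta_mul_nonpos {D : Setting n P Q} {t : ℝ} {x y : Vec n} {M : SMult n P Q}
    (hM : KKTAt D t x y M) {i : Fin n} (hy : 0 < y i) : signedEta t x y M i * x i ≤ 0 := by
  obtain ⟨⟨-, -, -, hbox, -⟩, -, -, -, -, hge, hle, -, -⟩ := hM
  have ht : 0 ≤ t := by linarith [hbox i]
  unfold signedEta
  split_ifs with h1 h2 h2
  · have := hge i h1
    have := hle i h2
    simp only [Hge, Hle, Finset.mem_filter, Finset.mem_univ, true_and] at h1 h2
    nlinarith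
  · have := hge i h1
    simp only [Hge, Finset.mem_filter, Finset.mem_univ, true_and] at h1
    nlinarith
  · have := hle i h2
    simp only [Hle, Finset.mem_filter, Finset.mem_univ, true_and] at h2
    nlinarith
  · simp

variable (D : Setting n P Q) (xb yb : Vec n)

def kktCoeff (t : ℝ) (x y : Vec n) (M : SMult n P Q) : Slot n P Q → ℝ :=
  slotElim M.lam (fun q => if q ∈ Q0 D x then M.mu1 q else 0)
    (fun i => if i ∈ Eact D y then M.mu2 i else 0) M.mu3
    (fun i => if i ∈ a10 xb yb then 0 else signedEta t x y M i * y i)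
    (fun i => if i ∈ a01 xb yb then 0 else signedEta t x y M i * x i + nuExt y M i)

def kktCol (x y : Vec n) : Slot n P Q → Vec n × Vec n :=
  slotElim (fun p => (grad (D.h p) x, 0)) (fun q => (grad (D.g q) x, 0)) (fun i => -ey i) eAll
    (fun i => if i ∈ a01 xb yb then ex i + (x i / y i) • ey i else ex i)
    (fun i => if i ∈ a10 xb yb then (y i / x i) • ex i + ey i else ey i)

def licqSupport : Set (Slot n P Q) :=
  {j | slotElim (fun _ => True) (· ∈ Q0 D xb) (· ∈ Eact D yb) ((∑ i, yb i) = (n : ℝ) - D.s)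
    (· ∈ a01 xb yb ∪ a00 xb yb) (· ∈ a10 xb yb ∪ a00 xb yb) j}

def NearLimit (x y : Vec n) : Prop :=
  Q0 D x ⊆ Q0 D xb ∧ Eact D y ⊆ Eact D yb ∧
  ((∑ i, yb i) ≠ (n : ℝ) - D.s → (∑ i, y i) ≠ (n : ℝ) - D.s) ∧
  (∀ i ∈ a01 xb yb, y i ≠ 0) ∧ (∀ i ∈ a10 xb yb, x i ≠ 0)

variable {D xb yb}

theorem forall_notMem_licqSupport {w : Slot n P Q → ℝ} :
    (∀ j ∉ licqSupport D xb yb, w j = 0) ↔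
      (∀ q ∉ Q0 D xb, w (.ineq q) = 0) ∧ (∀ i ∉ Eact D yb, w (.upper i) = 0) ∧
      ((∑ i, yb i) ≠ (n : ℝ) - D.s → w .card = 0) ∧
      (∀ i ∉ a01 xb yb ∪ a00 xb yb, w (.dirX i) = 0) ∧
      (∀ i ∉ a10 xb yb ∪ a00 xb yb, w (.dirY i) = 0) := by
  constructor
  · intro h
    exact ⟨fun q hq => h _ hq, fun i hi => h _ hi, fun hs => h _ hs, fun i hi => h _ hi,
      fun i hi => h _ hi⟩
  · rintro ⟨hq, he, hs, hx, hy⟩ (p | q | i | ⟨⟩ | i | i) hj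
    · exact absurd trivial hj
    · exact hq q hj
    · exact he i hj
    · exact hs hj
    · exact hx i hj
    · exact hy i hj

theorem kktCol_limit :
    kktCol D xb yb xb yb = slotElim (fun p => (grad (D.h p) xb, 0))
      (fun q => (grad (D.g q) xb, 0)) (fun i => -ey i) eAll ex ey := by
  funext j
  rcases j with p | q | i | ⟨⟩ | i | i
  all_goals simp only [kktCol, slotElim, Sum.elim_inl, Sum.elim_inr]
  · split_ifs with h
    · simp [(Finset.mem_filter.mp h).2.1]
    · rfl
  · split_ifs with h
    · simp [(Finset.mem_filter.mp h).2.2]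
    · rfl

theorem sum_smul_kktCol_limit {w : Slot n P Q → ℝ}
    (hw : ∀ j ∉ licqSupport D xb yb, w j = 0) :
    ∑ j, w j • kktCol D xb yb xb yb j =
      (∑ p, w (.eqn p) • ((grad (D.h p) xb, (0 : Vec n)) : Vec n × Vec n))
      + (∑ q ∈ Q0 D xb, w (.ineq q) • ((grad (D.g q) xb, (0 : Vec n)) : Vec n × Vec n))
      - (∑ i ∈ Eact D yb, w (.upper i) • ey i)
      + w .card • eAll
      + (∑ i ∈ a01 xb yb ∪ a00 xb yb, w (.dirX i) • ex i)
      + (∑ i ∈ a10 xb yb ∪ a00 xb yb, w (.dirY i) • ey i) := by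
  obtain ⟨hq, he, -, hx, hy⟩ := forall_notMem_licqSupport.mp hw
  rw [kktCol_limit, sum_slot]
  simp only [slotElim, Sum.elim_inl, Sum.elim_inr, smul_neg, Finset.sum_neg_distrib]
  rw [← Finset.sum_subset (Finset.subset_univ (Q0 D xb)) fun q _ h => by simp [hq q h],
    ← Finset.sum_subset (Finset.subset_univ (Eact D yb)) fun i _ h => by simp [he i h],
    ← Finset.sum_subset (Finset.subset_univ (a01 xb yb ∪ a00 xb yb))
      fun i _ h => by simp [hx i h],
    ← Finset.sum_subset (Finset.subset_univ (a10 xb yb ∪ a00 xb yb))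
      fun i _ h => by simp [hy i h]]
  abel

theorem MPOC_LICQ.eq_zero_of_sum_smul_kktCol (hlicq : MPOC_LICQ D xb yb)
    {w : Slot n P Q → ℝ} (hw : ∀ j ∉ licqSupport D xb yb, w j = 0)
    (h0 : ∑ j, w j • kktCol D xb yb xb yb j = 0) : w = 0 := by
  obtain ⟨hq, he, hs, hx, hy⟩ := forall_notMem_licqSupport.mp hw
  rw [sum_smul_kktCol_limit hw] at h0
  obtain ⟨hl', hq', he', hs', hx', hy'⟩ := hlicq (fun p => w (.eqn p)) (fun q => w (.ineq q))
    (fun i => -w (.upper i)) (w .card) (fun i => w (.dirX i)) (fun i => w (.dirY i)) hs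
    (by rw [← h0]; simp only [neg_smul, Finset.sum_neg_distrib]; abel)
  funext j
  rcases j with p | q | i | ⟨⟩ | i | i
  · exact hl' p
  · by_cases h : q ∈ Q0 D xb
    · exact hq' q h
    · exact hq q h
  · by_cases h : i ∈ Eact D yb
    · exact neg_eq_zero.mp (he' i h)
    · exact he i h
  · exact hs'
  · by_cases h : i ∈ a01 xb yb ∪ a00 xb yb
    · exact hx' i h
    · exact hx i h
  · by_cases h : i ∈ a10 xb yb ∪ a00 xb yb
    · exact hy' i h
    · exact hy i h

theorem tStatEq_toTMult {w : Slot n P Q → ℝ} (hw : ∀ j ∉ licqSupport D xb yb, w j = 0)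
    (h : ∑ j, w j • kktCol D xb yb xb yb j = (grad D.f xb, D.c)) :
    TStatEq D xb yb (toTMult w) := by
  rw [TStatEq, ← h, sum_smul_kktCol_limit hw, Finset.sum_union (disjoint_a01_a00 xb yb),
    Finset.sum_union (disjoint_a10_a00 xb yb)]
  simp only [toTMult, Finset.sum_add_distrib]
  abel

variable (D) in
theorem eventually_nearLimit {X Y : ℕ → Vec n} (hX : Tendsto X atTop (𝓝 xb))
    (hY : Tendsto Y atTop (𝓝 yb)) : ∀ᶠ k in atTop, NearLimit D xb yb (X k) (Y k) := by
  have hXi := tendsto_pi_nhds.mp hX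
  have hYi := tendsto_pi_nhds.mp hY
  have hsum : Tendsto (fun k => ∑ i, Y k i) atTop (𝓝 (∑ i, yb i)) :=
    tendsto_finsetSum _ fun i _ => hYi i
  filter_upwards [eventually_all.mpr fun q =>
      (((D.hg q).continuous.tendsto xb).comp hX).eventually_imp_ne 0,
    eventually_all.mpr fun i => (hYi i).eventually_imp_ne (1 + D.ε),
    hsum.eventually_imp_ne _, eventually_all.mpr fun i => (hYi i).eventually_imp_ne 0,
    eventually_all.mpr fun i => (hXi i).eventually_imp_ne 0] with k hQ0 hE hs hy hx
  refine ⟨fun q hq => ?_, fun i hi => ?_, hs, fun i hi => hy i ?_, fun i hi => hx i ?_⟩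
  · by_contra h
    simp only [Q0, Finset.mem_filter, Finset.mem_univ, true_and] at hq h
    exact hQ0 q h hq
  · by_contra h
    simp only [Eact, Finset.mem_filter, Finset.mem_univ, true_and] at hi h
    exact hE i h hi
  · exact (Finset.mem_filter.mp hi).2.2.ne'
  · exact (Finset.mem_filter.mp hi).2.1

variable (D) in
theorem tendsto_kktCol {X Y : ℕ → Vec n} (hX : Tendsto X atTop (𝓝 xb))
    (hY : Tendsto Y atTop (𝓝 yb)) :
    Tendsto (fun k => kktCol D xb yb (X k) (Y k)) atTop (𝓝 (kktCol D xb yb xb yb)) := by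
  have hXi := tendsto_pi_nhds.mp hX
  have hYi := tendsto_pi_nhds.mp hY
  refine tendsto_pi_nhds.mpr fun j => ?_
  rcases j with p | q | i | ⟨⟩ | i | i
  all_goals simp only [kktCol, slotElim, Sum.elim_inl, Sum.elim_inr]
  · exact (((continuous_grad ((D.hh p).of_le one_le_two)).tendsto xb).comp hX).prodMk_nhds
      tendsto_const_nhds
  · exact (((continuous_grad ((D.hg q).of_le one_le_two)).tendsto xb).comp hX).prodMk_nhds
      tendsto_const_nhds
  · exact tendsto_const_nhds
  · exact tendsto_const_nhds
  · split_ifs with h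
    · have hy : yb i ≠ 0 := (Finset.mem_filter.mp h).2.2.ne'
      exact tendsto_const_nhds.add (((hXi i).div (hYi i) hy).smul_const _)
    · exact tendsto_const_nhds
  · split_ifs with h
    · have hx : xb i ≠ 0 := (Finset.mem_filter.mp h).2.1
      exact (((hYi i).div (hXi i) hx).smul_const _).add tendsto_const_nhds
    · exact tendsto_const_nhds

theorem kktCoeff_smul_kktCol_dir (hfeas : feasR D xb yb) {t : ℝ} {x y : Vec n}
    {M : SMult n P Q} (hnear : NearLimit D xb yb x y) (i : Fin n) :
    kktCoeff D xb yb t x y M (.dirX i) • kktCol D xb yb x y (.dirX i)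
      + kktCoeff D xb yb t x y M (.dirY i) • kktCol D xb yb x y (.dirY i)
      = signedEta t x y M i • hvec x y i + nuExt y M i • ey i := by
  have hνy : nuExt y M i * y i = 0 := by
    unfold nuExt
    split_ifs with h
    · simp only [Nact, Finset.mem_filter, Finset.mem_univ, true_and] at h
      rw [h, mul_zero]
    · rw [zero_mul]
  simp only [kktCoeff, kktCol, slotElim, Sum.elim_inl, Sum.elim_inr, hvec_eq]
  rcases mem_a01_or_mem_a10_or_mem_a00 hfeas.2.2.2.1 (fun i => (hfeas.2.2.2.2 i).1) i
    with h | h | h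
  · have hy := hnear.2.2.2.1 i h
    have hν : nuExt y M i = 0 := if_neg (by simp [Nact, hy])
    simp only [h, Finset.disjoint_left.mp (disjoint_a01_a10 xb yb) h, hν, if_true, if_false]
    match_scalars <;> field_simp
  · have hx := hnear.2.2.2.2 i h
    simp only [h, Finset.disjoint_right.mp (disjoint_a01_a10 xb yb) h, if_true, if_false]
    match_scalars
    · field_simp
      linear_combination hνy
    · ring
  · simp only [Finset.disjoint_right.mp (disjoint_a01_a00 xb yb) h,
      Finset.disjoint_right.mp (disjoint_a10_a00 xb yb) h, if_false]
    match_scalars <;> ring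

theorem sum_kktCoeff_smul_kktCol (hfeas : feasR D xb yb) {t : ℝ} {x y : Vec n}
    {M : SMult n P Q} (hnear : NearLimit D xb yb x y) (hM : KKTAt D t x y M) :
    ∑ j, kktCoeff D xb yb t x y M j • kktCol D xb yb x y j = (grad D.f x, D.c) := by
  rw [hM.2.2.2.2.2.2.2.2, sum_slot, add_assoc, ← Finset.sum_add_distrib,
    Finset.sum_congr rfl fun i _ => kktCoeff_smul_kktCol_dir hfeas hnear i]
  simp only [kktCoeff, kktCol, slotElim, Sum.elim_inl, Sum.elim_inr, signedEta, nuExt, Q0, Eact,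
    Hge, Hle, Nact, Finset.sum_filter, Finset.mem_filter, Finset.mem_univ, true_and, sub_smul,
    ite_smul, zero_smul, smul_neg, Finset.sum_neg_distrib, Finset.sum_add_distrib,
    Finset.sum_sub_distrib]
  abel

theorem kktCoeff_notMem_licqSupport (hfeas : feasR D xb yb) {t : ℝ} {x y : Vec n}
    {M : SMult n P Q} (hnear : NearLimit D xb yb x y) (hM : KKTAt D t x y M) :
    ∀ j ∉ licqSupport D xb yb, kktCoeff D xb yb t x y M j = 0 := by
  obtain ⟨hQ0, hE, hsum, -, -⟩ := hnear
  have htri := mem_a01_or_mem_a10_or_mem_a00 hfeas.2.2.2.1 (fun i => (hfeas.2.2.2.2 i).1)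
  refine forall_notMem_licqSupport.mpr ⟨fun q hq => ?_, fun i hi => ?_, fun hs => ?_,
    fun i hi => ?_, fun i hi => ?_⟩
  all_goals simp only [kktCoeff, slotElim, Sum.elim_inl, Sum.elim_inr]
  · exact if_neg fun h => hq (hQ0 h)
  · exact if_neg fun h => hi (hE h)
  · exact (mul_eq_zero.mp hM.2.2.2.2.1).resolve_right (sub_ne_zero.mpr (hsum hs))
  · rw [Finset.mem_union, not_or] at hi
    exact if_pos ((htri i).resolve_left hi.1 |>.resolve_right hi.2)
  · rw [Finset.mem_union, not_or] at hi
    exact if_pos ((htri i).resolve_right (not_or.mpr hi))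

theorem kktCoeff_ineq_nonneg {t : ℝ} {x y : Vec n} {M : SMult n P Q} (hM : KKTAt D t x y M)
    (q : Q) : 0 ≤ kktCoeff D xb yb t x y M (.ineq q) := by
  simp only [kktCoeff, slotElim, Sum.elim_inl, Sum.elim_inr]
  split_ifs with h
  exacts [hM.2.1 q h, le_rfl]

theorem kktCoeff_upper_nonneg {t : ℝ} {x y : Vec n} {M : SMult n P Q} (hM : KKTAt D t x y M)
    (i : Fin n) : 0 ≤ kktCoeff D xb yb t x y M (.upper i) := by
  simp only [kktCoeff, slotElim, Sum.elim_inl, Sum.elim_inr]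
  split_ifs with h
  exacts [hM.2.2.1 i h, le_rfl]

theorem kktCoeff_dirX_mul_max_dirY {t : ℝ} {x y : Vec n} {M : SMult n P Q}
    (hM : KKTAt D t x y M) {i : Fin n} (hi : i ∈ a00 xb yb) :
    kktCoeff D xb yb t x y M (.dirX i) * max (kktCoeff D xb yb t x y M (.dirY i)) 0 = 0 := by
  simp only [kktCoeff, slotElim, Sum.elim_inr, Sum.elim_inl,
    Finset.disjoint_right.mp (disjoint_a01_a00 xb yb) hi,
    Finset.disjoint_right.mp (disjoint_a10_a00 xb yb) hi, if_false]
  rcases (hM.1.2.2.2.2 i).1.eq_or_lt with hy | hy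
  · rw [← hy, mul_zero, zero_mul]
  · have hν : nuExt y M i = 0 := if_neg (by simp [Nact, hy.ne'])
    rw [hν, add_zero, max_eq_right (signedEta_mul_nonpos hM hy), mul_zero]

theorem tStatAt_toTMult (hfeas : feasR D xb yb) {t : ℕ → ℝ} {X Y : ℕ → Vec n}
    {M : ℕ → SMult n P Q} (hM : ∀ k, KKTAt D (t k) (X k) (Y k) (M k)) {w : Slot n P Q → ℝ}
    (hw : ∀ j ∉ licqSupport D xb yb, w j = 0)
    (hlim : Tendsto (fun k => kktCoeff D xb yb (t k) (X k) (Y k) (M k)) atTop (𝓝 w))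
    (hsum : ∑ j, w j • kktCol D xb yb xb yb j = (grad D.f xb, D.c)) :
    TStatAt D xb yb (toTMult w) := by
  have hwj := tendsto_pi_nhds.mp hlim
  obtain ⟨-, -, hcard, -, -⟩ := forall_notMem_licqSupport.mp hw
  refine ⟨hfeas, fun q _ => ?_, fun i _ => ?_, ?_, ?_, fun i hi => ?_, tStatEq_toTMult hw hsum⟩
  · exact ge_of_tendsto' (hwj (.ineq q)) fun k => kktCoeff_ineq_nonneg (hM k) q
  · exact ge_of_tendsto' (hwj (.upper i)) fun k => kktCoeff_upper_nonneg (hM k) i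
  · exact ge_of_tendsto' (hwj .card) fun k => (hM k).2.2.2.1
  · by_cases hs : (∑ i, yb i) = (n : ℝ) - D.s
    · rw [hs, sub_self, mul_zero]
    · exact mul_eq_zero_of_left (hcard hs) _
  · have h0 : w (.dirX i) * max (w (.dirY i)) 0 = 0 :=
      tendsto_nhds_unique ((hwj _).mul ((hwj _).max tendsto_const_nhds))
        (tendsto_const_nhds.congr fun k => (kktCoeff_dirX_mul_max_dirY (hM k) hi).symm)
    exact (mul_eq_zero.mp h0).imp id max_eq_right_iff.mp

theorem statement8_general {n : ℕ} {P Q : Type*} [Fintype P] [Fintype Q]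
    (D : Setting n P Q) (t : ℕ → ℝ)
    (X Y : ℕ → Vec n) (hK : ∀ k, KKT D (t k) (X k) (Y k))
    (xb yb : Vec n)
    (hconv : Filter.Tendsto (fun k => ((X k, Y k) : Vec n × Vec n))
      Filter.atTop (nhds (xb, yb)))
    (hfeas : feasR D xb yb) (hlicq : MPOC_LICQ D xb yb) :
    TStat D xb yb := by
  choose M hM using hK
  have hX : Tendsto X atTop (𝓝 xb) := (continuous_fst.tendsto _).comp hconv
  have hY : Tendsto Y atTop (𝓝 yb) := (continuous_snd.tendsto _).comp hconv
  have hnear := eventually_nearLimit D hX hY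
  have hgrad : Tendsto (fun k => ((grad D.f (X k), D.c) : Vec n × Vec n)) atTop
      (𝓝 (grad D.f xb, D.c)) :=
    (((continuous_grad (D.hf.of_le one_le_two)).tendsto xb).comp hX).prodMk_nhds
      tendsto_const_nhds
  obtain ⟨w, hw, hlim, hsum⟩ := exists_tendsto_of_tendsto_sum_smul (tendsto_kktCol D hX hY)
    (fun w hw => hlicq.eq_zero_of_sum_smul_kktCol hw)
    (hnear.mono fun k hk => kktCoeff_notMem_licqSupport hfeas hk (hM k))
    (hgrad.congr' (hnear.mono fun k hk => (sum_kktCoeff_smul_kktCol hfeas hk (hM k)).symm))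
  exact ⟨toTMult w, tStatAt_toTMult hfeas hM hw hlim hsum⟩

/-- Theorem 2: limits of KKT points of S(t) for t → 0 are
T-stationary points of R, provided MPOC-LICQ holds at the limit. -/
theorem statement8 {n : ℕ} {P Q : Type*} [Fintype P] [Fintype Q]
    (D : Setting n P Q) (t : ℕ → ℝ) (htpos : ∀ k, 0 < t k)
    (ht0 : Filter.Tendsto t Filter.atTop (nhds 0))
    (X Y : ℕ → Vec n) (hK : ∀ k, KKT D (t k) (X k) (Y k))
    (xb yb : Vec n)
    (hconv : Filter.Tendsto (fun k => ((X k, Y k) : Vec n × Vec n))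
      Filter.atTop (nhds (xb, yb)))
    (hfeas : feasR D xb yb) (hlicq : MPOC_LICQ D xb yb) :
    TStat D xb yb :=
  statement8_general D t X Y hK xb yb hconv hfeas hlicq

end Scholtes
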